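/- Let G be a finite connected multigraph, s ∈ V a fixed sink, and D ∈ ℤ^V. Then D is G-parking with respect to s if and only if for every nonempty subset S ⊆ V \\ {s} there exists v ∈ S with D_v < (number of edges from v to V \\ S). -/

import Mathlib

open Finset

/-- Laplacian of a loopless multigraph given by edge multiplicities `m`. -/
def lap {V : Type*} [Fintype V] [DecidableEq V] (m : V → V → ℕ) : Matrix V V ℤ :=
  fun u v => if u = v then (∑ w, (m u w : ℤ)) else -(m u v : ℤ)

/-
If a script `σ ≥ 0` vanishing at the sink can be fired without debt, let `S` be the set where `σ`
attains its positive maximum. Then `s ∉ S`, and at each `v ∈ S` every edge leaving `S` drops `σ` by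
at least `1`, so `(Lσ)_v` is at least the number of edges from `v` to `V \ S`; hence `D_v` is too.
Conversely, a set `S` with `D_v ≥ #edges(v, V \ S)` for all `v ∈ S` makes `χ_S` such a script.
-/

section Laplacian

variable {V : Type*} [Fintype V] [DecidableEq V] {m : V → V → ℕ}

theorem lap_mulVec_apply (hloop : ∀ v, m v v = 0) (σ : V → ℤ) (v : V) :
    (lap m).mulVec σ v = ∑ w, (m v w : ℤ) * (σ v - σ w) := by
  have hentry : ∀ w, lap m v w * σ w
      = (if v = w then ∑ u, (m v u : ℤ) else 0) * σ w - (m v w : ℤ) * σ w := by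
    intro w
    by_cases h : v = w
    · subst h; simp [lap, hloop v]
    · simp [lap, h]
  simp only [Matrix.mulVec, dotProduct, hentry, Finset.sum_sub_distrib, ite_mul, zero_mul,
    Finset.sum_ite_eq, Finset.mem_univ, if_true, mul_sub, Finset.sum_mul]

theorem lap_mulVec_indicator_of_mem (hloop : ∀ v, m v v = 0) {S : Finset V} {v : V}
    (hv : v ∈ S) :
    (lap m).mulVec (fun u => if u ∈ S then 1 else 0) v = ∑ u ∈ Sᶜ, (m v u : ℤ) := by
  rw [lap_mulVec_apply hloop, ← Finset.sum_add_sum_compl S]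
  have hS : ∑ u ∈ S, (m v u : ℤ) * ((if v ∈ S then 1 else 0) - if u ∈ S then 1 else 0) = 0 :=
    Finset.sum_eq_zero fun u hu => by simp [hv, hu]
  rw [hS, zero_add]
  exact Finset.sum_congr rfl fun u hu => by simp [hv, Finset.mem_compl.mp hu]

theorem lap_mulVec_indicator_nonpos_of_notMem (hloop : ∀ v, m v v = 0) {S : Finset V} {v : V}
    (hv : v ∉ S) : (lap m).mulVec (fun u => if u ∈ S then 1 else 0) v ≤ 0 := by
  rw [lap_mulVec_apply hloop]
  refine Finset.sum_nonpos fun u _ => ?_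
  by_cases hu : u ∈ S <;> simp [hv, hu]

theorem sum_compl_le_lap_mulVec_of_max (hloop : ∀ v, m v v = 0) {σ : V → ℤ} {M : ℤ}
    (hle : ∀ u, σ u ≤ M) {v : V} (hv : σ v = M) :
    ∑ u ∈ (univ.filter fun u => σ u = M)ᶜ, (m v u : ℤ) ≤ (lap m).mulVec σ v := by
  rw [lap_mulVec_apply hloop]
  calc ∑ u ∈ (univ.filter fun u => σ u = M)ᶜ, (m v u : ℤ)
      ≤ ∑ u ∈ (univ.filter fun u => σ u = M)ᶜ, (m v u : ℤ) * (σ v - σ u) := by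
        refine Finset.sum_le_sum fun u hu => ?_
        have hlt : σ u < M := lt_of_le_of_ne (hle u) (by simpa using hu)
        nlinarith [Nat.cast_nonneg (α := ℤ) (m v u)]
    _ ≤ ∑ u, (m v u : ℤ) * (σ v - σ u) :=
        Finset.sum_le_sum_of_subset_of_nonneg (Finset.subset_univ _) fun u _ _ =>
          mul_nonneg (Nat.cast_nonneg _) (by linarith [hle u])

end Laplacian

theorem stmt17_general {V : Type*} [Fintype V] [DecidableEq V]
    (m : V → V → ℕ) (hloop : ∀ v, m v v = 0)
    (s : V) (D : V → ℤ) (hD : ∀ v, v ≠ s → 0 ≤ D v) :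
    (¬ ∃ σ : V → ℤ, (∀ v, 0 ≤ σ v) ∧ σ s = 0 ∧ σ ≠ 0 ∧
        ∀ v, v ≠ s → 0 ≤ (D - (lap m).mulVec σ) v) ↔
      (∀ S : Finset V, S.Nonempty → s ∉ S →
        ∃ v ∈ S, D v < ∑ u ∈ Sᶜ, (m v u : ℤ)) := by
  constructor
  · intro h S ⟨w, hw⟩ hsS
    by_contra! hS
    refine h ⟨fun u => if u ∈ S then 1 else 0, fun u => by positivity, by simp [hsS],
      fun h0 => by simpa [hw] using congrFun h0 w, fun v hvs => ?_⟩
    rw [Pi.sub_apply, sub_nonneg]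
    by_cases hv : v ∈ S
    · exact (lap_mulVec_indicator_of_mem hloop hv).trans_le (hS v hv)
    · exact (lap_mulVec_indicator_nonpos_of_notMem hloop hv).trans (hD v hvs)
  · rintro h ⟨σ, hσ, hσs, hσne, hge⟩
    obtain ⟨v, -, hvmax⟩ := Finset.exists_max_image univ σ ⟨s, mem_univ s⟩
    have hpos : 0 < σ v := by
      obtain ⟨w, hw⟩ := Function.ne_iff.mp hσne
      exact (lt_of_le_of_ne (hσ w) (Ne.symm hw)).trans_le (hvmax w (mem_univ w))
    obtain ⟨w, hw, hlt⟩ := h (univ.filter fun u => σ u = σ v) ⟨v, by simp⟩ (by simp; omega)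
    have hws : w ≠ s := by rintro rfl; simp at hw; omega
    have hbound := sum_compl_le_lap_mulVec_of_max hloop (fun u => hvmax u (mem_univ u))
      (by simpa using hw)
    have := hge w hws
    rw [Pi.sub_apply, sub_nonneg] at this
    omega

theorem stmt17 {V : Type*} [Fintype V] [DecidableEq V]
    (m : V → V → ℕ) (hsymm : ∀ u v, m u v = m v u) (hloop : ∀ v, m v v = 0)
    (hconn : (SimpleGraph.fromRel (fun u v => 0 < m u v)).Connected)
    (s : V) (D : V → ℤ) (hD : ∀ v, v ≠ s → 0 ≤ D v) :
    (¬ ∃ σ : V → ℤ, (∀ v, 0 ≤ σ v) ∧ σ s = 0 ∧ σ ≠ 0 ∧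
        ∀ v, v ≠ s → 0 ≤ (D - (lap m).mulVec σ) v) ↔
      (∀ S : Finset V, S.Nonempty → s ∉ S →
        ∃ v ∈ S, D v < ∑ u ∈ Sᶜ, (m v u : ℤ)) :=
  stmt17_general m hloop s D hD
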